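/- arXiv:1605.05421 — 2 statements merged into one kernel-verified Lean document; each statement's English description precedes it below -/
import Mathlib

section
/- If a connected regular graph has four distinct eigenvalues, then it is walk-regular: for every r ≥ 0, the number of closed walks of length r starting at a vertex x (i.e., the diagonal entry (A^r)_{xx}) is independent of x. -/
open Polynomial

noncomputable def adjm {V : Type*} [Fintype V] [DecidableEq V] (G : SimpleGraph V) :
    Matrix V V ℝ :=
  @SimpleGraph.adjMatrix ℝ V G (Classical.decRel _) _ _

/-- The adjacency spectrum of `G`, as a multiset of real roots of the
characteristic polynomial (so multiplicities are counted). -/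
noncomputable def spec {V : Type*} [Fintype V] [DecidableEq V] (G : SimpleGraph V) :
    Multiset ℝ :=
  (adjm G).charpoly.roots

/-- `G` is `k`-regular: every vertex has exactly `k` neighbours. -/
def IsReg {V : Type*} (G : SimpleGraph V) (k : ℕ) : Prop :=
  ∀ v : V, (G.neighborSet v).ncard = k

/-!
Let `p = ∏ (X - μ)` over the four distinct eigenvalues of the symmetric matrix `A`, so `p(A) = 0`
and `A ^ r` is a combination of `1, A, A², A³`; it suffices that these have constant diagonal.
For `1, A, A²` the diagonals are `1, 0, k`. The degree `k` is an eigenvalue with constant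
eigenvectors only (connectedness), so `q = p / (X - k)` gives `A q(A) = q(A) A = k q(A)`:
the columns and rows of `q(A)` are constant, and since `q` is monic of degree 3,
`A³ = q(A) - (lower powers)` has constant diagonal too.
-/

namespace Polynomial

variable {R S : Type*} [CommRing R] [Ring S] [Algebra R S] {a : S} {W : Submodule R S}

theorem aeval_mem_of_degree_lt {f : R[X]} {d : ℕ} (hf : f.degree < d)
    (hW : ∀ i < d, a ^ i ∈ W) : aeval a f ∈ W := by
  rw [aeval_def, eval₂_eq_sum, Polynomial.sum_def]
  refine Submodule.sum_mem _ fun i hi => ?_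
  rw [← Algebra.smul_def]
  exact W.smul_mem _ (hW i (by exact_mod_cast (le_degree_of_mem_supp i hi).trans_lt hf))

theorem Monic.pow_natDegree_mem {q : R[X]} (hq : q.Monic) (hqa : aeval a q ∈ W)
    (hW : ∀ i < q.natDegree, a ^ i ∈ W) : a ^ q.natDegree ∈ W := by
  have hlow : aeval a q.eraseLead ∈ W := by
    refine aeval_mem_of_degree_lt ?_ hW
    rcases eq_or_ne q 0 with rfl | hq0
    · simp
    · exact (degree_eraseLead_lt hq0).trans_le degree_le_natDegree
  have := sub_mem hqa hlow
  rwa [← self_sub_monomial_natDegree_leadingCoeff q, hq.leadingCoeff, monomial_one_right_eq_X_pow,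
    map_sub, sub_sub_cancel, aeval_X_pow] at this

theorem Monic.pow_mem_of_aeval_eq_zero [Nontrivial R] {p : R[X]} (hp : p.Monic)
    (hpa : aeval a p = 0) (hW : ∀ i < p.natDegree, a ^ i ∈ W) (r : ℕ) : a ^ r ∈ W := by
  rw [← aeval_X_pow (R := R), ← aeval_modByMonic_eq_self_of_root hpa]
  exact aeval_mem_of_degree_lt ((degree_modByMonic_lt _ hp).trans_le degree_le_natDegree) hW

theorem mul_aeval_eq_smul_of_aeval_X_sub_C_mul_eq_zero {μ : R} {q : R[X]}
    (h : aeval a ((X - C μ) * q) = 0) :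
    a * aeval a q = μ • aeval a q ∧ aeval a q * a = μ • aeval a q := by
  have hright := h
  rw [map_mul, map_sub, aeval_X, aeval_C, sub_mul, sub_eq_zero] at h
  rw [mul_comm, map_mul, map_sub, aeval_X, aeval_C, mul_sub, sub_eq_zero] at hright
  rw [Algebra.smul_def]
  exact ⟨h, hright.trans (Algebra.commutes _ _).symm⟩

end Polynomial

theorem Matrix.IsHermitian.aeval_prod_roots_charpoly_eq_zero {n : Type*} [Fintype n]
    [DecidableEq n] {A : Matrix n n ℝ} (hA : A.IsHermitian) :
    aeval A (∏ μ ∈ A.charpoly.roots.toFinset, (X - C μ)) = 0 := by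
  rw [← cfc_polynomial _ A hA.isSelfAdjoint]
  refine (cfc_congr fun x hx => ?_).trans (cfc_zero ℝ A)
  rw [Matrix.mem_spectrum_iff_isRoot_charpoly] at hx
  rw [eval_prod, Pi.zero_apply]
  exact Finset.prod_eq_zero (by simpa [A.charpoly_monic.ne_zero] using hx) (by simp)

def Matrix.constDiag (n R : Type*) [Semiring R] : Submodule R (Matrix n n R) where
  carrier := {M | ∀ i j, M i i = M j j}
  add_mem' hM hN i j := by simp [hM i j, hN i j]
  zero_mem' _ _ := rfl
  smul_mem' c M hM i j := by simp [hM i j]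

namespace SimpleGraph

open Matrix

variable {V : Type*} [Fintype V] [DecidableEq V] {G : SimpleGraph V} [DecidableRel G.Adj] {k : ℕ}

theorem IsRegularOfDegree.isRoot_charpoly_adjMatrix [Nonempty V] (hreg : G.IsRegularOfDegree k) :
    (G.adjMatrix ℝ).charpoly.IsRoot k := by
  rw [← Matrix.mem_spectrum_iff_isRoot_charpoly, ← Matrix.spectrum_toLin']
  refine Module.End.HasEigenvalue.mem_spectrum
    (Module.End.hasEigenvalue_of_hasEigenvector (x := Function.const V 1) ⟨?_, ?_⟩)
  · rw [Module.End.mem_eigenspace_iff]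
    ext v
    simp [hreg v]
  · exact Function.const_ne_zero.2 one_ne_zero

theorem IsRegularOfDegree.adjMatrix_pow_mem_constDiag (hreg : G.IsRegularOfDegree k) {i : ℕ}
    (hi : i < 3) : G.adjMatrix ℝ ^ i ∈ Matrix.constDiag V ℝ := by
  intro x y
  interval_cases i
  · simp
  · simp
  · rw [sq, adjMatrix_mul_self_apply_self, adjMatrix_mul_self_apply_self, hreg x, hreg y]

theorem Connected.eq_of_adjMatrix_mulVec_eq_smul (hconn : G.Connected)
    (hreg : G.IsRegularOfDegree k) {v : V → ℝ} (hv : G.adjMatrix ℝ *ᵥ v = (k : ℝ) • v)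
    (i j : V) : v i = v j := by
  have hlap : G.lapMatrix ℝ *ᵥ v = 0 := by
    ext x
    rw [lapMatrix, sub_mulVec, Pi.sub_apply, degMatrix_mulVec_apply, hv, hreg x]
    simp
  exact (lapMatrix_mulVec_eq_zero_iff_forall_reachable G).1 hlap i j (hconn i j)

theorem Connected.mem_constDiag_of_adjMatrix_mul_eq_smul (hconn : G.Connected)
    (hreg : G.IsRegularOfDegree k) {M : Matrix V V ℝ}
    (hAM : G.adjMatrix ℝ * M = (k : ℝ) • M) (hMA : M * G.adjMatrix ℝ = (k : ℝ) • M) :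
    M ∈ Matrix.constDiag V ℝ := by
  have hcol (i j l : V) : M i l = M j l :=
    hconn.eq_of_adjMatrix_mulVec_eq_smul hreg (v := fun x => M x l)
      (funext fun x => by simpa [mulVec, dotProduct, mul_apply] using congrFun₂ hAM x l) i j
  have hrow (i j l : V) : M l i = M l j := by
    refine hconn.eq_of_adjMatrix_mulVec_eq_smul hreg (v := fun x => M l x) (funext fun x => ?_) i j
    have h := congrFun₂ hMA l x
    rw [mul_apply, Matrix.smul_apply] at h
    rw [Pi.smul_apply, ← h, mulVec, dotProduct]
    exact Finset.sum_congr rfl fun y _ => by rw [mul_comm, (isSymm_adjMatrix G).apply]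
  intro i j
  rw [hcol i j i, hrow i j j]

theorem Connected.adjMatrix_pow_mem_constDiag (hconn : G.Connected)
    (hreg : G.IsRegularOfDegree k) (hfour : (G.adjMatrix ℝ).charpoly.roots.toFinset.card = 4)
    (r : ℕ) : G.adjMatrix ℝ ^ r ∈ Matrix.constDiag V ℝ := by
  have : Nonempty V := hconn.nonempty
  set A := G.adjMatrix ℝ
  set S := A.charpoly.roots.toFinset
  have hk : (k : ℝ) ∈ S := by
    simpa [S, A.charpoly_monic.ne_zero] using hreg.isRoot_charpoly_adjMatrix
  set q : ℝ[X] := ∏ μ ∈ S.erase (k : ℝ), (X - C μ)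
  have hq_monic : q.Monic := monic_prod_of_monic _ _ fun μ _ => monic_X_sub_C μ
  have hq_deg : q.natDegree = 3 := by
    rw [natDegree_prod_of_monic _ _ fun μ _ => monic_X_sub_C μ]
    simp [Finset.card_erase_of_mem hk, hfour]
  have hp : aeval A ((X - C (k : ℝ)) * q) = 0 := by
    rw [Finset.mul_prod_erase S (fun μ => X - C μ) hk]
    exact (G.isHermitian_adjMatrix ℝ).aeval_prod_roots_charpoly_eq_zero
  obtain ⟨hAq, hqA⟩ := mul_aeval_eq_smul_of_aeval_X_sub_C_mul_eq_zero hp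
  have hcube : A ^ 3 ∈ Matrix.constDiag V ℝ := hq_deg ▸
    hq_monic.pow_natDegree_mem (hconn.mem_constDiag_of_adjMatrix_mul_eq_smul hreg hAq hqA)
      (hq_deg ▸ fun i => hreg.adjMatrix_pow_mem_constDiag)
  refine ((monic_X_sub_C _).mul hq_monic).pow_mem_of_aeval_eq_zero hp (fun i hi => ?_) r
  rw [(monic_X_sub_C _).natDegree_mul hq_monic, natDegree_X_sub_C, hq_deg] at hi
  rcases Nat.lt_or_ge i 3 with hi3 | hi3
  · exact hreg.adjMatrix_pow_mem_constDiag hi3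
  · rwa [show i = 3 by omega]

end SimpleGraph

theorem isRegularOfDegree_of_isReg {V : Type*} [Fintype V] {G : SimpleGraph V}
    [DecidableRel G.Adj] {k : ℕ} (hreg : IsReg G k) : G.IsRegularOfDegree k := fun v => by
  rw [← hreg v, Set.ncard_eq_toFinset_card', ← SimpleGraph.neighborFinset_def]
  rfl

theorem adjm_eq_adjMatrix {V : Type*} [Fintype V] [DecidableEq V] (G : SimpleGraph V)
    [DecidableRel G.Adj] : adjm G = G.adjMatrix ℝ := by
  unfold adjm
  congr

/-- A connected regular graph with exactly four distinct adjacency eigenvalues is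
walk-regular: for every `r`, the diagonal entries of `A^r` are all equal. -/
theorem stmt_3 {n k : ℕ} (G : SimpleGraph (Fin n))
    (hconn : G.Connected) (hreg : IsReg G k)
    (hfour : (spec G).toFinset.card = 4) :
    ∀ (r : ℕ) (x y : Fin n), ((adjm G) ^ r) x x = ((adjm G) ^ r) y y := by
  classical
  rw [spec, adjm_eq_adjMatrix] at hfour
  rw [adjm_eq_adjMatrix]
  exact hconn.adjMatrix_pow_mem_constDiag (isRegularOfDegree_of_isReg hreg) hfour
end

section
/- For s, t ≥ 2, the graph K_{s,s} ⊛ J_t is a connected (st+t−1)-regular graph on 2st vertices with spectrum {[st+t−1]^1, [−st+t−1]^1, [t−1]^{2s−2}, [−1]^{2s(t−1)}}, which has exactly four distinct eigenvalues, exactly two of them simple, and has −1 as a (non-simple) eigenvalue. -/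
open Polynomial

/-- The clique blow-up `G ⊛ J_t`: every vertex of `G` is replaced by a `t`-clique, and
two cliques are completely joined iff the corresponding vertices are adjacent. -/
def blowup {V : Type*} (G : SimpleGraph V) (t : ℕ) : SimpleGraph (V × Fin t) where
  Adj x y := G.Adj x.1 y.1 ∨ (x.1 = y.1 ∧ x.2 ≠ y.2)
  symm := by
    constructor
    rintro ⟨u, i⟩ ⟨v, j⟩ (h | ⟨h, hij⟩)
    · exact Or.inl h.symm
    · exact Or.inr ⟨h.symm, hij.symm⟩
  loopless := by constructor; rintro ⟨u, i⟩ (h | ⟨-, h⟩) <;> simp_all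


/-!
The adjacency matrix of `G ⊛ J_t` is `(A(G) + 1) ⊗ J_t - 1`. For Hermitian matrices the
eigenvalues of a Kronecker product are the pairwise products of eigenvalues (the Kronecker
product of two eigenbases is an eigenbasis), and `J_t` has eigenvalues `t` once and `0` with multiplicity `t - 1`.
Hence every eigenvalue `λ` of `G` contributes `(λ + 1) t - 1` once and `-1` with multiplicity
`t - 1`. Up to relabeling the vertices, `A(K_{s,s}) = (J_2 - 1) ⊗ J_s`, whose spectrum is
`{s, -s, 0^{2s-2}}` by the same product rule.
-/

open Matrix Kronecker

namespace Multiset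

theorem map_product_map {α β γ δ : Type*} (s : Multiset α) (t : Multiset β)
    (f : α → γ) (g : β → δ) : s.map f ×ˢ t.map g = (s ×ˢ t).map (Prod.map f g) := by
  induction s using Multiset.induction <;> simp_all [map_map]

theorem map_mul_product_replicate_zero {R : Type*} [MulZeroClass R] (s : Multiset R) (k : ℕ) :
    (s ×ˢ replicate k 0).map (fun p => p.1 * p.2) = replicate (card s * k) 0 := by
  refine eq_replicate.mpr ⟨by simp, ?_⟩
  simp +contextual [mem_replicate]

theorem count_pair_add_replicate_add_replicate {α : Type*} [DecidableEq α]
    {a b c d : α} (h : [a, b, c, d].Nodup) (p q : ℕ) :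
    ({a, b} + replicate p c + replicate q d).count a = 1 ∧
      ({a, b} + replicate p c + replicate q d).count b = 1 ∧
      ({a, b} + replicate p c + replicate q d).count d = q := by
  simp only [List.nodup_cons, List.mem_cons, List.not_mem_nil, or_false, not_or,
    List.nodup_nil, not_false_eq_true, and_true] at h
  obtain ⟨⟨hab, hac, had⟩, ⟨hbc, hbd⟩, hcd⟩ := h
  simp [count_replicate, hab, hcd, Ne.symm hab, Ne.symm hac, Ne.symm had, Ne.symm hbc,
    Ne.symm hbd]

theorem card_toFinset_pair_add_replicate_add_replicate {α : Type*} [DecidableEq α]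
    {a b c d : α} {p q : ℕ} (h : [a, b, c, d].Nodup) (hp : p ≠ 0) (hq : q ≠ 0) :
    ({a, b} + replicate p c + replicate q d).toFinset.card = 4 := by
  have : ({a, b} + replicate p c + replicate q d).toFinset = [a, b, c, d].toFinset := by
    ext x
    simp [hp, hq]
  rw [this, List.toFinset_card_of_nodup h]
  rfl

end Multiset

namespace Matrix

theorem isHermitian_vecMulVec_one {R n : Type*} [Semiring R] [StarRing R] :
    (vecMulVec (1 : n → R) 1).IsHermitian :=
  IsHermitian.ext fun i j => by simp [vecMulVec_apply]

section Field

variable {K n : Type*} [Field K] [Fintype n] [DecidableEq n]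

theorem roots_charpoly_sub_scalar (M : Matrix n n K) (c : K) :
    (M - scalar n c).charpoly.roots = M.charpoly.roots.map (· - c) := by
  rw [charpoly_sub_scalar, ← one_mul X, ← C_1, roots_comp_C_mul_X_add_C _ _ _ isUnit_one]
  simp

theorem roots_charpoly_sub_one (M : Matrix n n K) :
    (M - 1).charpoly.roots = M.charpoly.roots.map (· - 1) := by
  simpa only [map_one] using roots_charpoly_sub_scalar M 1

theorem roots_charpoly_add_one (M : Matrix n n K) :
    (M + 1).charpoly.roots = M.charpoly.roots.map (· + 1) := by
  simpa only [map_neg, map_one, sub_neg_eq_add] using roots_charpoly_sub_scalar M (-1)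

theorem roots_charpoly_diagonal (d : n → K) :
    (diagonal d).charpoly.roots = Finset.univ.val.map d := by
  rw [charpoly_diagonal, Finset.prod_eq_multiset_prod,
    ← roots_multiset_prod_X_sub_C (Finset.univ.val.map d), Multiset.map_map]
  rfl

theorem roots_charpoly_vecMulVec [Nonempty n] (u v : n → K) :
    (vecMulVec u v).charpoly.roots = (u ⬝ᵥ v) ::ₘ Multiset.replicate (Fintype.card n - 1) 0 := by
  have hcard : Fintype.card n = Fintype.card n - 1 + 1 :=
    (Nat.sub_add_cancel Fintype.card_pos).symm
  have : (vecMulVec u v).charpoly = X ^ (Fintype.card n - 1) * (X - C (u ⬝ᵥ v)) := by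
    rw [charpoly_vecMulVec, hcard, Nat.add_sub_cancel, smul_eq_C_mul]
    ring
  rw [this, roots_mul (by simp [X_sub_C_ne_zero]), roots_X_pow, roots_X_sub_C,
    Multiset.nsmul_singleton, add_comm, Multiset.singleton_add]

end Field

theorem IsHermitian.roots_charpoly_kronecker {𝕜 m n : Type*} [RCLike 𝕜] [Fintype m]
    [DecidableEq m] [Fintype n] [DecidableEq n] {A : Matrix m m 𝕜} {B : Matrix n n 𝕜}
    (hA : A.IsHermitian) (hB : B.IsHermitian) :
    (A ⊗ₖ B).charpoly.roots =
      (A.charpoly.roots ×ˢ B.charpoly.roots).map fun p => p.1 * p.2 := by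
  set U : Matrix m m 𝕜 := ↑hA.eigenvectorUnitary
  set V : Matrix n n 𝕜 := ↑hB.eigenvectorUnitary
  have hU : star U * U = 1 := Unitary.coe_star_mul_self _
  have hV : star V * V = 1 := Unitary.coe_star_mul_self _
  have hAB : A ⊗ₖ B = (U ⊗ₖ V) * (diagonal (RCLike.ofReal ∘ hA.eigenvalues) ⊗ₖ
      diagonal (RCLike.ofReal ∘ hB.eigenvalues)) * (star U ⊗ₖ star V) := by
    conv_lhs => rw [hA.spectral_theorem, hB.spectral_theorem]
    simp only [Unitary.conjStarAlgAut_apply, mul_kronecker_mul]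
    rfl
  rw [hAB, charpoly_mul_comm, ← mul_assoc, ← mul_kronecker_mul, hU, hV, one_kronecker_one,
    one_mul, diagonal_kronecker_diagonal, roots_charpoly_diagonal,
    hA.roots_charpoly_eq_eigenvalues, hB.roots_charpoly_eq_eigenvalues,
    Multiset.map_product_map, Multiset.map_map, ← Finset.product_val, Finset.univ_product_univ]
  rfl

end Matrix

theorem completeBipartiteGraph_connected (α β : Type*) [Nonempty α] [Nonempty β] :
    (completeBipartiteGraph α β).Connected := by
  obtain ⟨a⟩ := ‹Nonempty α›
  obtain ⟨b⟩ := ‹Nonempty β›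
  have hb : ∀ a', (completeBipartiteGraph α β).Reachable (.inl a') (.inr b) :=
    fun _ => SimpleGraph.Adj.reachable (by simp)
  have hreach : ∀ x, (completeBipartiteGraph α β).Reachable (.inl a) x := by
    rintro (a' | b')
    · exact (hb a).trans (hb a').symm
    · exact SimpleGraph.Adj.reachable (by simp)
  exact SimpleGraph.Connected.mk fun x y => (hreach x).symm.trans (hreach y)

theorem isReg_completeBipartiteGraph (α : Type*) :
    IsReg (completeBipartiteGraph α α) (Nat.card α) := by
  rintro (a | a)
  · have : (completeBipartiteGraph α α).neighborSet (.inl a) = Set.range Sum.inr := by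
      ext (b | b) <;> simp
    rw [this, Set.ncard_range_of_injective Sum.inr_injective]
  · have : (completeBipartiteGraph α α).neighborSet (.inr a) = Set.range Sum.inl := by
      ext (b | b) <;> simp
    rw [this, Set.ncard_range_of_injective Sum.inl_injective]

section Blowup

variable {V : Type*}

theorem blowup_connected {G : SimpleGraph V} (hG : G.Connected) (t : ℕ) [NeZero t] :
    (blowup G t).Connected := by
  have : Nonempty V := hG.nonempty
  refine SimpleGraph.Connected.mk fun ⟨u, i⟩ ⟨v, j⟩ => ?_
  let layer : G →g blowup G t := ⟨fun w => (w, i), Or.inl⟩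
  refine ((hG u v).map layer).trans ?_
  rcases eq_or_ne i j with rfl | hij
  · rfl
  · exact SimpleGraph.Adj.reachable (Or.inr ⟨rfl, hij⟩)

theorem isReg_blowup [Finite V] {G : SimpleGraph V} {k : ℕ} (hG : IsReg G k) (t : ℕ) :
    IsReg (blowup G t) (k * t + t - 1) := by
  rintro ⟨u, i⟩
  have hN : (blowup G t).neighborSet (u, i) = G.neighborSet u ×ˢ Set.univ ∪ {u} ×ˢ {i}ᶜ := by
    ext ⟨v, j⟩
    simp [blowup, eq_comm]
  have hdisj : Disjoint (G.neighborSet u ×ˢ (Set.univ : Set (Fin t))) ({u} ×ˢ {i}ᶜ) := by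
    rw [Set.disjoint_left]
    rintro ⟨v, j⟩ ⟨huv, -⟩ ⟨rfl, -⟩
    exact G.loopless.irrefl _ huv
  rw [hN, Set.ncard_union_eq hdisj, Set.ncard_prod, Set.ncard_prod, hG u, Set.ncard_univ,
    Nat.card_fin, Set.ncard_singleton, Set.ncard_compl, Set.ncard_singleton, Nat.card_fin]
  have := i.pos
  omega

variable [Fintype V] [DecidableEq V]

theorem adjm_isHermitian (G : SimpleGraph V) : (adjm G).IsHermitian := by
  classical exact isHermitian_iff_isSymm.mpr G.isSymm_adjMatrix

theorem card_spec (G : SimpleGraph V) : Multiset.card (spec G) = Fintype.card V := by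
  simp [spec, (adjm_isHermitian G).roots_charpoly_eq_eigenvalues]

theorem adjm_blowup (G : SimpleGraph V) (t : ℕ) :
    adjm (blowup G t) = (adjm G + 1) ⊗ₖ vecMulVec 1 1 - 1 := by
  ext ⟨u, i⟩ ⟨v, j⟩
  simp only [adjm, SimpleGraph.adjMatrix_apply, Matrix.sub_apply, kroneckerMap_apply,
    Matrix.add_apply, one_apply, vecMulVec_apply, Pi.one_apply, mul_one, Prod.mk.injEq]
  split_ifs <;> simp_all [blowup]

theorem spec_blowup (G : SimpleGraph V) (t : ℕ) [NeZero t] :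
    spec (blowup G t) = (spec G).map (fun μ : ℝ => (μ + 1) * t - 1) +
      Multiset.replicate (Fintype.card V * (t - 1)) (-1 : ℝ) := by
  rw [spec, adjm_blowup, roots_charpoly_sub_one,
    ((adjm_isHermitian G).add isHermitian_one).roots_charpoly_kronecker isHermitian_vecMulVec_one,
    roots_charpoly_add_one, roots_charpoly_vecMulVec, one_dotProduct_one]
  simp [Multiset.map_mul_product_replicate_zero, Multiset.map_map]
  rw [← card_spec]
  rfl

end Blowup

theorem adjm_completeBipartiteGraph (α : Type*) [Fintype α] [DecidableEq α] :
    adjm (completeBipartiteGraph α α) =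
      reindex (Equiv.boolProdEquivSum α) (Equiv.boolProdEquivSum α)
        ((vecMulVec 1 1 - 1) ⊗ₖ vecMulVec 1 1) := by
  ext x y
  obtain ⟨⟨b, a⟩, rfl⟩ := (Equiv.boolProdEquivSum α).surjective x
  obtain ⟨⟨c, a'⟩, rfl⟩ := (Equiv.boolProdEquivSum α).surjective y
  simp only [adjm, SimpleGraph.adjMatrix_apply, reindex_apply, submatrix_apply,
    Equiv.symm_apply_apply, kroneckerMap_apply, Matrix.sub_apply, one_apply, vecMulVec_apply,
    Pi.one_apply, mul_one]
  cases b <;> cases c <;> simp [Equiv.boolProdEquivSum]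

theorem spec_completeBipartiteGraph (α : Type*) [Fintype α] [DecidableEq α] [Nonempty α] :
    spec (completeBipartiteGraph α α) =
      {(Fintype.card α : ℝ), -(Fintype.card α : ℝ)} +
        Multiset.replicate (2 * Fintype.card α - 2) 0 := by
  rw [spec, adjm_completeBipartiteGraph, charpoly_reindex,
    (isHermitian_vecMulVec_one.sub isHermitian_one).roots_charpoly_kronecker
      isHermitian_vecMulVec_one,
    roots_charpoly_sub_one, roots_charpoly_vecMulVec, roots_charpoly_vecMulVec,
    one_dotProduct_one, one_dotProduct_one]
  have hcard : 2 * Fintype.card α - 2 = (Fintype.card α - 1) + (Fintype.card α - 1) := by omega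
  norm_num [Multiset.map_mul_product_replicate_zero, hcard, Multiset.replicate_add]

theorem spec_blowup_completeBipartiteGraph (s t : ℕ) [NeZero s] [NeZero t] :
    spec (blowup (completeBipartiteGraph (Fin s) (Fin s)) t) =
      {(s : ℝ) * t + t - 1, -(s : ℝ) * t + t - 1} +
        Multiset.replicate (2 * s - 2) ((t : ℝ) - 1) +
        Multiset.replicate (2 * s * (t - 1)) (-1) := by
  rw [spec_blowup, spec_completeBipartiteGraph]
  simp only [Fintype.card_fin, Fintype.card_sum, Multiset.map_add, Multiset.map_replicate,
    Multiset.insert_eq_cons, Multiset.map_cons, Multiset.map_singleton, two_mul]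
  ring_nf

/-- For `s, t ≥ 2`, `K_{s,s} ⊛ J_t` is a connected `(st+t-1)`-regular graph on `2st`
vertices with spectrum `{[st+t-1]^1, [-st+t-1]^1, [t-1]^{2s-2}, [-1]^{2s(t-1)}}`;
it has exactly four distinct eigenvalues, exactly two of them simple,
and `-1` is a non-simple eigenvalue. -/
theorem stmt_8 (s t : ℕ) (hs : 2 ≤ s) (ht : 2 ≤ t) :
    (blowup (completeBipartiteGraph (Fin s) (Fin s)) t).Connected ∧
    IsReg (blowup (completeBipartiteGraph (Fin s) (Fin s)) t) (s * t + t - 1) ∧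
    spec (blowup (completeBipartiteGraph (Fin s) (Fin s)) t) =
      {((s : ℝ) * t + t - 1 : ℝ), (-(s : ℝ) * t + t - 1 : ℝ)} +
        Multiset.replicate (2 * s - 2) ((t : ℝ) - 1) +
        Multiset.replicate (2 * s * (t - 1)) (-1 : ℝ) ∧
    (spec (blowup (completeBipartiteGraph (Fin s) (Fin s)) t)).toFinset.card = 4 ∧
    (spec (blowup (completeBipartiteGraph (Fin s) (Fin s)) t)).count
      ((s : ℝ) * t + t - 1) = 1 ∧
    (spec (blowup (completeBipartiteGraph (Fin s) (Fin s)) t)).count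
      (-(s : ℝ) * t + t - 1) = 1 ∧
    2 ≤ (spec (blowup (completeBipartiteGraph (Fin s) (Fin s)) t)).count (-1 : ℝ) := by
  have : NeZero s := ⟨by omega⟩
  have : NeZero t := ⟨by omega⟩
  have hspec := spec_blowup_completeBipartiteGraph s t
  have hreg := isReg_blowup (isReg_completeBipartiteGraph (Fin s)) t
  rw [Nat.card_fin] at hreg
  have hs' : (2 : ℝ) ≤ s := by exact_mod_cast hs
  have ht' : (2 : ℝ) ≤ t := by exact_mod_cast ht
  have hnodup : [(s : ℝ) * t + t - 1, -(s : ℝ) * t + t - 1, (t : ℝ) - 1, -1].Nodup := by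
    simp only [List.nodup_cons, List.mem_cons, List.not_mem_nil, or_false, not_or,
      List.nodup_nil, not_false_eq_true, and_true]
    refine ⟨⟨?_, ?_, ?_⟩, ⟨?_, ?_⟩, ?_⟩ <;> intro h <;> nlinarith
  have hp : 2 * s - 2 ≠ 0 := by omega
  have hq : 2 ≤ 2 * s * (t - 1) := by
    simpa using Nat.mul_le_mul (show 2 ≤ 2 * s by omega) (show 1 ≤ t - 1 by omega)
  obtain ⟨hca, hcb, hcd⟩ :=
    Multiset.count_pair_add_replicate_add_replicate hnodup (2 * s - 2) (2 * s * (t - 1))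
  rw [hspec]
  exact ⟨blowup_connected (completeBipartiteGraph_connected _ _) t, hreg, rfl,
    Multiset.card_toFinset_pair_add_replicate_add_replicate hnodup hp (by omega), hca, hcb,
    hcd.symm ▸ hq⟩
end
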